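/- (Zero curvature / Lax pair for the H3 potential system.) Fix integers n, m and real numbers δ, λ ∈ ℝ. Let U and ψ be smooth real functions satisfying the H3 potential system on an open set D ⊆ ℝ² where α ≠ β, α ≠ 0, β ≠ 0, α ≠ λ², β ≠ λ², ∂ψ/∂α ≠ 0 and ∂ψ/∂β ≠ 0. Define the 2×2 real matrix-valued functions L := (1/(α−λ²))·[[α·U_α + λ²·δ·ψ_α, 2λ·ψ_α],[(λ/(8α·ψ_α))·(n² − 4α²·(U_α + δ·ψ_α)²), −α·U_α − λ²·δ·ψ_α]] and N := (1/(β−λ²))·[[β·U_β + λ²·δ·ψ_β, 2λ·ψ_β],[(λ/(8β·ψ_β))·(m² − 4β²·(U_β + δ·ψ_β)²), −β·U_β − λ²·δ·ψ_β]], where U_α := ∂U/∂α, U_β := ∂U/∂β, ψ_α := ∂ψ/∂α, ψ_β := ∂ψ/∂β. Then the zero-curvature condition ∂L/∂β − ∂N/∂α + L·N − N·L = 0 holds on D (so the linear system Ψ_α = L·Ψ, Ψ_β = N·Ψ is compatible). -/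

import Mathlib

/-- Partial derivative with respect to the first variable. -/
noncomputable def pda (f : ℝ × ℝ → ℝ) (p : ℝ × ℝ) : ℝ :=
  deriv (fun x => f (x, p.2)) p.1

/-- Partial derivative with respect to the second variable. -/
noncomputable def pdb (f : ℝ × ℝ → ℝ) (p : ℝ × ℝ) : ℝ :=
  deriv (fun y => f (p.1, y)) p.2


/-- Entrywise partial derivative of a matrix-valued function w.r.t. the first variable. -/
noncomputable def pdaM (L : ℝ × ℝ → Matrix (Fin 2) (Fin 2) ℝ) (p : ℝ × ℝ) :
    Matrix (Fin 2) (Fin 2) ℝ :=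
  Matrix.of fun i j => pda (fun q => L q i j) p

/-- Entrywise partial derivative of a matrix-valued function w.r.t. the second variable. -/
noncomputable def pdbM (L : ℝ × ℝ → Matrix (Fin 2) (Fin 2) ℝ) (p : ℝ × ℝ) :
    Matrix (Fin 2) (Fin 2) ℝ :=
  Matrix.of fun i j => pdb (fun q => L q i j) p

/-- The H3 potential system. -/
def H3pot (n m : ℤ) (δ : ℝ) (U ψ : ℝ × ℝ → ℝ) (p : ℝ × ℝ) : Prop :=
  pdb (pda U) p = (1 / (4 * (p.1 - p.2))) *
      (((4 * p.1 ^ 2 * (pda U p) ^ 2 - (n : ℝ) ^ 2) / p.1) * (pdb ψ p / pda ψ p)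
        - ((4 * p.2 ^ 2 * (pdb U p) ^ 2 - (m : ℝ) ^ 2) / p.2) * (pda ψ p / pdb ψ p))
      + δ ^ 2 * pda ψ p * pdb ψ p ∧
  pdb (pda ψ) p = (2 / (p.1 - p.2)) *
      (p.1 * pda U p * pdb ψ p - p.2 * pdb U p * pda ψ p)

/-- The Lax matrix L of the linear problem Ψ_α = L·Ψ for the H3 potential system. -/
noncomputable def laxLH3 (n : ℤ) (δ lam : ℝ) (U ψ : ℝ × ℝ → ℝ) (p : ℝ × ℝ) :
    Matrix (Fin 2) (Fin 2) ℝ :=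
  (1 / (p.1 - lam ^ 2)) •
    !![p.1 * pda U p + lam ^ 2 * δ * pda ψ p, 2 * lam * pda ψ p;
       (lam / (8 * p.1 * pda ψ p)) *
         ((n : ℝ) ^ 2 - 4 * p.1 ^ 2 * (pda U p + δ * pda ψ p) ^ 2),
       -(p.1 * pda U p) - lam ^ 2 * δ * pda ψ p]

/-- The Lax matrix N of the linear problem Ψ_β = N·Ψ for the H3 potential system. -/
noncomputable def laxNH3 (m : ℤ) (δ lam : ℝ) (U ψ : ℝ × ℝ → ℝ) (p : ℝ × ℝ) :
    Matrix (Fin 2) (Fin 2) ℝ :=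
  (1 / (p.2 - lam ^ 2)) •
    !![p.2 * pdb U p + lam ^ 2 * δ * pdb ψ p, 2 * lam * pdb ψ p;
       (lam / (8 * p.2 * pdb ψ p)) *
         ((m : ℝ) ^ 2 - 4 * p.2 ^ 2 * (pdb U p + δ * pdb ψ p) ^ 2),
       -(p.2 * pdb U p) - lam ^ 2 * δ * pdb ψ p]

section helpers

lemma pda_eq_fderiv {f : ℝ × ℝ → ℝ} {q : ℝ × ℝ} (hf : DifferentiableAt ℝ f q) :
    pda f q = fderiv ℝ f q (1, 0) := by
  have h1 : HasDerivAt (fun x : ℝ => (x, q.2)) ((1 : ℝ), (0 : ℝ)) q.1 :=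
    (hasDerivAt_id q.1).prodMk (hasDerivAt_const q.1 q.2)
  exact (hf.hasFDerivAt.comp_hasDerivAt q.1 h1).deriv

lemma pdb_eq_fderiv {f : ℝ × ℝ → ℝ} {q : ℝ × ℝ} (hf : DifferentiableAt ℝ f q) :
    pdb f q = fderiv ℝ f q (0, 1) := by
  have h1 : HasDerivAt (fun y : ℝ => (q.1, y)) ((0 : ℝ), (1 : ℝ)) q.2 :=
    (hasDerivAt_const q.2 q.1).prodMk (hasDerivAt_id q.2)
  exact (hf.hasFDerivAt.comp_hasDerivAt q.2 h1).deriv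

variable {f : ℝ × ℝ → ℝ} {D : Set (ℝ × ℝ)} {p : ℝ × ℝ}

lemma ev_diff (hD : IsOpen D) (hf : ContDiffOn ℝ (⊤ : ℕ∞) f D) (hp : p ∈ D) :
    ∀ᶠ q in nhds p, DifferentiableAt ℝ f q := by
  filter_upwards [hD.mem_nhds hp] with q hq
  exact (hf.contDiffAt (hD.mem_nhds hq)).differentiableAt (by simp)

lemma pda_eventuallyEq (hD : IsOpen D) (hf : ContDiffOn ℝ (⊤ : ℕ∞) f D) (hp : p ∈ D) :
    pda f =ᶠ[nhds p] fun q => fderiv ℝ f q (1, 0) := by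
  filter_upwards [ev_diff hD hf hp] with q hq
  exact pda_eq_fderiv hq

lemma pdb_eventuallyEq (hD : IsOpen D) (hf : ContDiffOn ℝ (⊤ : ℕ∞) f D) (hp : p ∈ D) :
    pdb f =ᶠ[nhds p] fun q => fderiv ℝ f q (0, 1) := by
  filter_upwards [ev_diff hD hf hp] with q hq
  exact pdb_eq_fderiv hq

lemma fderiv_app_diff (hD : IsOpen D) (hf : ContDiffOn ℝ (⊤ : ℕ∞) f D) (hp : p ∈ D) (v : ℝ × ℝ) :
    DifferentiableAt ℝ (fun q => fderiv ℝ f q v) p := by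
  have h1 : ContDiffAt ℝ (⊤ : ℕ∞) f p := hf.contDiffAt (hD.mem_nhds hp)
  have h2 : ContDiffAt ℝ (⊤ : ℕ∞) (fderiv ℝ f) p := h1.fderiv_right (by simp)
  exact (h2.differentiableAt (by simp)).clm_apply (differentiableAt_const v)

lemma pda_diff (hD : IsOpen D) (hf : ContDiffOn ℝ (⊤ : ℕ∞) f D) (hp : p ∈ D) :
    DifferentiableAt ℝ (pda f) p :=
  (fderiv_app_diff hD hf hp (1, 0)).congr_of_eventuallyEq (pda_eventuallyEq hD hf hp)

lemma pdb_diff (hD : IsOpen D) (hf : ContDiffOn ℝ (⊤ : ℕ∞) f D) (hp : p ∈ D) :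
    DifferentiableAt ℝ (pdb f) p :=
  (fderiv_app_diff hD hf hp (0, 1)).congr_of_eventuallyEq (pdb_eventuallyEq hD hf hp)

lemma fderiv_fderiv_app (hD : IsOpen D) (hf : ContDiffOn ℝ (⊤ : ℕ∞) f D) (hp : p ∈ D) (v w : ℝ × ℝ) :
    fderiv ℝ (fun q => fderiv ℝ f q v) p w = fderiv ℝ (fderiv ℝ f) p w v := by
  have h1 : ContDiffAt ℝ (⊤ : ℕ∞) f p := hf.contDiffAt (hD.mem_nhds hp)
  have h2 : ContDiffAt ℝ (⊤ : ℕ∞) (fderiv ℝ f) p := h1.fderiv_right (by simp)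
  have h3 : DifferentiableAt ℝ (fderiv ℝ f) p := h2.differentiableAt (by simp)
  have := h3.hasFDerivAt.clm_apply (hasFDerivAt_const v p)
  simp at this
  rw [this.fderiv]
  simp

lemma clairaut (hD : IsOpen D) (hf : ContDiffOn ℝ (⊤ : ℕ∞) f D) (hp : p ∈ D) :
    pda (pdb f) p = pdb (pda f) p := by
  have h1 : ContDiffAt ℝ (⊤ : ℕ∞) f p := hf.contDiffAt (hD.mem_nhds hp)
  have hsym : IsSymmSndFDerivAt ℝ f p := h1.isSymmSndFDerivAt (by simp only [minSmoothness_of_isRCLikeNormedField]; exact WithTop.coe_le_coe.mpr le_top)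
  have e1 : pda (pdb f) p = fderiv ℝ (pdb f) p (1, 0) := pda_eq_fderiv (pdb_diff hD hf hp)
  have e2 : pdb (pda f) p = fderiv ℝ (pda f) p (0, 1) := pdb_eq_fderiv (pda_diff hD hf hp)
  rw [e1, e2, (pdb_eventuallyEq hD hf hp).fderiv_eq, (pda_eventuallyEq hD hf hp).fderiv_eq,
    fderiv_fderiv_app hD hf hp _ _, fderiv_fderiv_app hD hf hp _ _]
  exact hsym (1, 0) (0, 1)

lemma slice2_hasDerivAt {g : ℝ × ℝ → ℝ} {α β : ℝ} (hg : DifferentiableAt ℝ g (α, β)) :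
    HasDerivAt (fun y => g (α, y)) (pdb g (α, β)) β := by
  have hd : DifferentiableAt ℝ (fun y => g (α, y)) β :=
    hg.comp β ((differentiableAt_const α).prodMk differentiableAt_id)
  exact hd.hasDerivAt

lemma slice1_hasDerivAt {g : ℝ × ℝ → ℝ} {α β : ℝ} (hg : DifferentiableAt ℝ g (α, β)) :
    HasDerivAt (fun x => g (x, β)) (pda g (α, β)) α := by
  have hd : DifferentiableAt ℝ (fun x => g (x, β)) α :=
    hg.comp α (differentiableAt_id.prodMk (differentiableAt_const β))
  exact hd.hasDerivAt

end helpers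

set_option maxHeartbeats 4000000

/-- Zero curvature / Lax pair for the H3 potential system. -/
theorem zero_curvature_H3_potential_system
    (n m : ℤ) (δ lam : ℝ) (U ψ : ℝ × ℝ → ℝ)
    (D : Set (ℝ × ℝ)) (hD : IsOpen D)
    (hαβ : ∀ p ∈ D, p.1 ≠ p.2) (hα0 : ∀ p ∈ D, p.1 ≠ 0) (hβ0 : ∀ p ∈ D, p.2 ≠ 0)
    (hal : ∀ p ∈ D, p.1 ≠ lam ^ 2) (hbl : ∀ p ∈ D, p.2 ≠ lam ^ 2)
    (hψa : ∀ p ∈ D, pda ψ p ≠ 0) (hψb : ∀ p ∈ D, pdb ψ p ≠ 0)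
    (hU : ContDiffOn ℝ (⊤ : ℕ∞) U D) (hψ : ContDiffOn ℝ (⊤ : ℕ∞) ψ D)
    (hsys : ∀ p ∈ D, H3pot n m δ U ψ p) :
    ∀ p ∈ D,
      pdbM (laxLH3 n δ lam U ψ) p - pdaM (laxNH3 m δ lam U ψ) p
        + laxLH3 n δ lam U ψ p * laxNH3 m δ lam U ψ p
        - laxNH3 m δ lam U ψ p * laxLH3 n δ lam U ψ p = 0 := by
  rintro ⟨α, β⟩ hp
  -- nonzero facts
  have hne1 : α - β ≠ 0 := sub_ne_zero_of_ne (hαβ _ hp)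
  have hne2 : α ≠ 0 := hα0 _ hp
  have hne3 : β ≠ 0 := hβ0 _ hp
  have hne4 : α - lam ^ 2 ≠ 0 := sub_ne_zero_of_ne (hal _ hp)
  have hne5 : β - lam ^ 2 ≠ 0 := sub_ne_zero_of_ne (hbl _ hp)
  have hsa : pda ψ (α, β) ≠ 0 := hψa _ hp
  have hsb : pdb ψ (α, β) ≠ 0 := hψb _ hp
  -- derivatives of partials
  have hu : HasDerivAt (fun y => pda U (α, y)) (pdb (pda U) (α, β)) β :=
    slice2_hasDerivAt (pda_diff hD hU hp)
  have hs : HasDerivAt (fun y => pda ψ (α, y)) (pdb (pda ψ) (α, β)) β :=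
    slice2_hasDerivAt (pda_diff hD hψ hp)
  have hu2 : HasDerivAt (fun x => pdb U (x, β)) (pdb (pda U) (α, β)) α := by
    have := slice1_hasDerivAt (pdb_diff hD hU hp)
    rwa [clairaut hD hU hp] at this
  have hs2 : HasDerivAt (fun x => pdb ψ (x, β)) (pdb (pda ψ) (α, β)) α := by
    have := slice1_hasDerivAt (pdb_diff hD hψ hp)
    rwa [clairaut hD hψ hp] at this
  -- entry derivative computations for L (w.r.t. second variable)
  have hL00 := ((hu.const_mul α).add (hs.const_mul (lam ^ 2 * δ))).const_mul (1 / (α - lam ^ 2))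
  have hL01 := (hs.const_mul (2 * lam)).const_mul (1 / (α - lam ^ 2))
  have hdenL : 8 * α * pda ψ (α, β) ≠ 0 :=
    mul_ne_zero (mul_ne_zero (by norm_num : (8:ℝ) ≠ 0) hne2) hsa
  have hfracL := (hasDerivAt_const β lam).div (hs.const_mul (8 * α)) hdenL
  have hqL := hu.add (hs.const_mul δ)
  have hnumL := (hasDerivAt_const β ((n : ℝ) ^ 2)).sub ((hqL.pow 2).const_mul (4 * α ^ 2))
  have hL10 := (hfracL.mul hnumL).const_mul (1 / (α - lam ^ 2))
  have hL11 := (((hu.const_mul α).neg).sub (hs.const_mul (lam ^ 2 * δ))).const_mul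
      (1 / (α - lam ^ 2))
  -- entry derivative computations for N (w.r.t. first variable)
  have hN00 := ((hu2.const_mul β).add (hs2.const_mul (lam ^ 2 * δ))).const_mul (1 / (β - lam ^ 2))
  have hN01 := (hs2.const_mul (2 * lam)).const_mul (1 / (β - lam ^ 2))
  have hdenN : 8 * β * pdb ψ (α, β) ≠ 0 :=
    mul_ne_zero (mul_ne_zero (by norm_num : (8:ℝ) ≠ 0) hne3) hsb
  have hfracN := (hasDerivAt_const α lam).div (hs2.const_mul (8 * β)) hdenN
  have hqN := hu2.add (hs2.const_mul δ)
  have hnumN := (hasDerivAt_const α ((m : ℝ) ^ 2)).sub ((hqN.pow 2).const_mul (4 * β ^ 2))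
  have hN10 := (hfracN.mul hnumN).const_mul (1 / (β - lam ^ 2))
  have hN11 := (((hu2.const_mul β).neg).sub (hs2.const_mul (lam ^ 2 * δ))).const_mul
      (1 / (β - lam ^ 2))
  simp only [Pi.add_apply, Pi.sub_apply, Pi.neg_apply, Pi.mul_apply, Pi.div_apply, Pi.pow_apply]
    at hL00 hL01 hL10 hL11 hN00 hN01 hN10 hN11
  -- entry function identifications
  have f00 : (fun y => laxLH3 n δ lam U ψ (α, y) 0 0)
      = (fun y => 1 / (α - lam ^ 2) * (α * pda U (α, y) + lam ^ 2 * δ * pda ψ (α, y))) := by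
    funext y; simp [laxLH3]
  have f01 : (fun y => laxLH3 n δ lam U ψ (α, y) 0 1)
      = (fun y => 1 / (α - lam ^ 2) * (2 * lam * pda ψ (α, y))) := by
    funext y; simp [laxLH3]
  have f10 : (fun y => laxLH3 n δ lam U ψ (α, y) 1 0)
      = (fun y => 1 / (α - lam ^ 2) * (lam / (8 * α * pda ψ (α, y)) *
          ((n : ℝ) ^ 2 - 4 * α ^ 2 * (pda U (α, y) + δ * pda ψ (α, y)) ^ 2))) := by
    funext y; simp [laxLH3]
  have f11 : (fun y => laxLH3 n δ lam U ψ (α, y) 1 1)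
      = (fun y => 1 / (α - lam ^ 2) * (-(α * pda U (α, y)) - lam ^ 2 * δ * pda ψ (α, y))) := by
    funext y; simp [laxLH3]
  have g00 : (fun x => laxNH3 m δ lam U ψ (x, β) 0 0)
      = (fun x => 1 / (β - lam ^ 2) * (β * pdb U (x, β) + lam ^ 2 * δ * pdb ψ (x, β))) := by
    funext x; simp [laxNH3]
  have g01 : (fun x => laxNH3 m δ lam U ψ (x, β) 0 1)
      = (fun x => 1 / (β - lam ^ 2) * (2 * lam * pdb ψ (x, β))) := by
    funext x; simp [laxNH3]
  have g10 : (fun x => laxNH3 m δ lam U ψ (x, β) 1 0)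
      = (fun x => 1 / (β - lam ^ 2) * (lam / (8 * β * pdb ψ (x, β)) *
          ((m : ℝ) ^ 2 - 4 * β ^ 2 * (pdb U (x, β) + δ * pdb ψ (x, β)) ^ 2))) := by
    funext x; simp [laxNH3]
  have g11 : (fun x => laxNH3 m δ lam U ψ (x, β) 1 1)
      = (fun x => 1 / (β - lam ^ 2) * (-(β * pdb U (x, β)) - lam ^ 2 * δ * pdb ψ (x, β))) := by
    funext x; simp [laxNH3]
  obtain ⟨hsys1, hsys2⟩ := hsys _ hp
  simp only at hsys1 hsys2
  refine Matrix.ext fun i j => ?_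
  fin_cases i <;> fin_cases j <;>
  · simp only [Matrix.sub_apply, Matrix.add_apply, Matrix.mul_apply, Fin.sum_univ_two,
      Matrix.zero_apply, pdbM, pdaM, Matrix.of_apply, Fin.zero_eta, Fin.mk_one, pdb, pda]
    simp only [f00, f01, f10, f11, g00, g01, g10, g11]
    simp only [hL00.deriv, hL01.deriv, hL10.deriv, hL11.deriv,
      hN00.deriv, hN01.deriv, hN10.deriv, hN11.deriv]
    simp only [laxLH3, laxNH3]
    simp only [Matrix.smul_apply, Matrix.cons_val', Matrix.cons_val_zero, Matrix.cons_val_one,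
      Matrix.head_cons, Matrix.head_fin_const, Matrix.empty_val', Matrix.cons_val_fin_one,
      smul_eq_mul]
    simp only [hsys1, hsys2]
    push_cast
    norm_num
    field_simp
    ring
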